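/- Directional Lorentz–Luxemburg theorem: an F^n-directional Banach function space X over a σ-finite measure space with the directional saturation property satisfies the Fatou property if and only if X is Köthe reflexive (X'' = X with equal norms). -/

import Mathlib

/-!
Hölder's inequality for the Köthe pairing gives `‖f‖'' ≤ ‖f‖` for any homogeneous `‖·‖`, and by
Fatou's lemma every Köthe dual norm, in particular `‖·‖''`, has the Fatou property; so Köthe
reflexivity implies the Fatou property.

Conversely, assume the Fatou property. By homogeneity it suffices to show `1 ≤ ‖φ‖''` whenever
`1 < ‖φ‖`, and truncating `φ` to the sets `{|φ| ≤ k}` inside a σ-finite exhaustion (harmless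
by the Fatou property) we may assume `φ ∈ L²`. The unit ball of `X` inside `L²` is convex, and
closed because of the Fatou property, so Hahn–Banach and Riesz give `g ∈ L²` with
`Re ⟨g, w⟩ < 1` on that ball and `1 < Re ⟨g, φ⟩`. Multiplying test functions by a pointwise phase
(allowed by the ideal property) turns `Re ⟨g, w⟩` into `|⟨g, w⟩|`, so `‖g‖' ≤ 1`, and then
`1 ≤ ∫ |⟨g, φ⟩| ≤ ‖φ‖''`.
-/

open MeasureTheory ENNReal Filter Topology

variable {𝕜 : Type*} [RCLike 𝕜] {n : ℕ}
  [MeasurableSpace (EuclideanSpace 𝕜 (Fin n))] [BorelSpace (EuclideanSpace 𝕜 (Fin n))]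
  {Ω : Type*} [MeasurableSpace Ω]

/-- The Köthe dual (extended-valued) norm of an `𝔽ⁿ`-directional Banach function space
encoded by its extended norm `eN`:
`‖g‖_{X'} = sup { ∫ |f·g| dμ : f measurable, ‖f‖_X ≤ 1 }`. -/
noncomputable def dirDualNorm (μ : Measure Ω) (eN : (Ω → EuclideanSpace 𝕜 (Fin n)) → ℝ≥0∞)
    (g : Ω → EuclideanSpace 𝕜 (Fin n)) : ℝ≥0∞ :=
  ⨆ f ∈ {f : Ω → EuclideanSpace 𝕜 (Fin n) | Measurable f ∧ eN f ≤ 1},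
    ∫⁻ x, (‖(inner 𝕜 (f x) (g x) : 𝕜)‖₊ : ℝ≥0∞) ∂μ

theorem le_of_forall_smul_lt_one_imp_le_one {V : Type*} [SMul 𝕜 V] {N M : V → ℝ≥0∞}
    (hN : ∀ (c : 𝕜) v, N (c • v) = ‖c‖₊ * N v) (hM : ∀ (c : 𝕜) v, M (c • v) = ‖c‖₊ * M v)
    (v : V) (h : ∀ c : 𝕜, N (c • v) < 1 → M (c • v) ≤ 1) : M v ≤ N v := by
  refine le_of_forall_gt_imp_ge_of_dense fun a hNa => ?_
  induction a using ENNReal.recTopCoe with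
  | top => exact le_top
  | coe r =>
    have hr : (r : ℝ≥0∞) ≠ 0 := (pos_of_gt hNa).ne'
    have hc : (‖(((r⁻¹ : NNReal) : ℝ) : 𝕜)‖₊ : ℝ≥0∞) = (r : ℝ≥0∞)⁻¹ := by
      simp [ENNReal.coe_inv (ENNReal.coe_ne_zero.1 hr)]
    have hscaled := h ((r⁻¹ : NNReal) : ℝ) (by
      rw [hN, hc, ← ENNReal.div_eq_inv_mul, ENNReal.div_lt_iff (.inl hr) (.inl coe_ne_top),
        one_mul]
      exact hNa)
    rwa [hM, hc, ← ENNReal.div_eq_inv_mul, ENNReal.div_le_iff hr coe_ne_top, one_mul] at hscaled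

section Truncation

variable {E : Type*} [NormedAddCommGroup E] (μ : Measure Ω) [SigmaFinite μ]

def truncSet (f : Ω → E) (k : ℕ) : Set Ω := spanningSets μ k ∩ {x | ‖f x‖ ≤ k}

theorem measurableSet_truncSet {f : Ω → E} (hf : StronglyMeasurable f) (k : ℕ) :
    MeasurableSet (truncSet μ f k) :=
  (measurableSet_spanningSets μ k).inter (measurableSet_le hf.norm.measurable measurable_const)

theorem eventually_mem_truncSet (f : Ω → E) (x : Ω) : ∀ᶠ k in atTop, x ∈ truncSet μ f k := by
  obtain ⟨k₀, hk₀⟩ := Set.mem_iUnion.1 ((iUnion_spanningSets μ).symm ▸ Set.mem_univ x)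
  filter_upwards [eventually_ge_atTop k₀, eventually_ge_atTop ⌈‖f x‖⌉₊] with k hk hk'
  exact ⟨monotone_spanningSets μ hk hk₀,
    show ‖f x‖ ≤ k from (Nat.le_ceil _).trans (by exact_mod_cast hk')⟩

theorem tendsto_indicator_truncSet (f : Ω → E) (x : Ω) :
    Tendsto (fun k => (truncSet μ f k).indicator f x) atTop (𝓝 (f x)) :=
  tendsto_const_nhds.congr' <| (eventually_mem_truncSet μ f x).mono fun _ hk =>
    (Set.indicator_of_mem hk f).symm

theorem memLp_indicator_truncSet {f : Ω → E} (hf : StronglyMeasurable f) (p : ℝ≥0∞) (k : ℕ) :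
    MemLp ((truncSet μ f k).indicator f) p μ := by
  have : IsFiniteMeasure (μ.restrict (truncSet μ f k)) := isFiniteMeasure_restrict.2
    ((measure_mono Set.inter_subset_left).trans_lt (measure_spanningSets_lt_top μ k)).ne
  refine (memLp_indicator_iff_restrict (measurableSet_truncSet μ hf k)).2 <|
    .of_bound hf.aestronglyMeasurable k ?_
  exact (ae_restrict_mem (measurableSet_truncSet μ hf k)).mono fun _ hx => hx.2

end Truncation

section IdealProperty

variable (𝕜) {E : Type*} [AddCommGroup E] [Module 𝕜 E]

def HasIdealProperty (eN : (Ω → E) → ℝ≥0∞) : Prop :=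
  ∀ (h : Ω → 𝕜) (f : Ω → E), Measurable h → (∀ x, ‖h x‖ ≤ 1) → eN (fun x => h x • f x) ≤ eN f

variable {𝕜}

theorem HasIdealProperty.indicator_le {eN : (Ω → E) → ℝ≥0∞} (hideal : HasIdealProperty 𝕜 eN)
    {s : Set Ω} (hs : MeasurableSet s) (f : Ω → E) : eN (s.indicator f) ≤ eN f := by
  convert hideal (s.indicator 1) f (measurable_one.indicator hs) fun x => ?_ using 2
  · funext x
    by_cases hx : x ∈ s <;> simp [hx]
  · by_cases hx : x ∈ s <;> simp [hx]

end IdealProperty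

theorem exists_measurable_phase {F : Ω → 𝕜} (hF : Measurable F) :
    ∃ θ : Ω → 𝕜, Measurable θ ∧ (∀ x, ‖θ x‖ ≤ 1) ∧ ∀ x, θ x * F x = ‖F x‖ := by
  -- at the zeros of `F` the junk value `‖0‖ / 0 = 0` does no harm
  refine ⟨fun x => (‖F x‖ : 𝕜) / F x, by fun_prop, fun x => ?_, fun x => ?_⟩
  · rw [norm_div, RCLike.norm_ofReal, abs_norm]
    exact div_self_le_one _
  · exact div_mul_cancel_of_imp fun h => by simp [h]

theorem exists_re_inner_lt_one_lt_re_inner {H : Type*} [NormedAddCommGroup H]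
    [InnerProductSpace 𝕜 H] [CompleteSpace H] [NormedSpace ℝ H] [IsScalarTower ℝ 𝕜 H]
    {s : Set H} (hconv : Convex ℝ s) (hclosed : IsClosed s) (h0 : 0 ∈ s) {x : H}
    (hx : x ∉ s) :
    ∃ y : H, (∀ w ∈ s, RCLike.re (inner 𝕜 y w) < 1) ∧ 1 < RCLike.re (inner 𝕜 y x) := by
  obtain ⟨Λ, u, hs, hux⟩ := RCLike.geometric_hahn_banach_closed_point (𝕜 := 𝕜) hconv hclosed hx
  have hu : 0 < u := by simpa using hs 0 h0
  refine ⟨(InnerProductSpace.toDual 𝕜 H).symm (((u⁻¹ : ℝ) : 𝕜) • Λ), fun w hw => ?_, ?_⟩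
  all_goals
    rw [InnerProductSpace.toDual_symm_apply, smul_apply, smul_eq_mul, RCLike.re_ofReal_mul]
  · exact (inv_mul_lt_one₀ hu).2 (hs w hw)
  · exact (one_lt_inv_mul₀ hu).2 hux

section L2

variable {E : Type*} [NormedAddCommGroup E] [InnerProductSpace 𝕜 E] {μ : Measure Ω}
  {g : Lp E 2 μ} {G f : Ω → E}

theorem integrable_inner_of_ae_eq (hG : g =ᵐ[μ] G) (hf : MemLp f 2 μ) :
    Integrable (fun x => (inner 𝕜 (G x) (f x) : 𝕜)) μ :=
  (L2.integrable_inner g (hf.toLp f)).congr <| by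
    filter_upwards [hG, hf.coeFn_toLp] with x hGx hfx
    rw [hGx, hfx]

theorem inner_toLp_eq_integral (hG : g =ᵐ[μ] G) (hf : MemLp f 2 μ) :
    (inner 𝕜 g (hf.toLp f) : 𝕜) = ∫ x, (inner 𝕜 (G x) (f x) : 𝕜) ∂μ := by
  rw [L2.inner_def]
  refine integral_congr_ae ?_
  filter_upwards [hG, hf.coeFn_toLp] with x hGx hfx
  rw [hGx, hfx]

end L2

section Pairing

variable (𝕜) {E : Type*} [NormedAddCommGroup E] [InnerProductSpace 𝕜 E] (μ : Measure Ω)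

noncomputable def absPairing (f g : Ω → E) : ℝ≥0∞ :=
  ∫⁻ x, (‖(inner 𝕜 (f x) (g x) : 𝕜)‖₊ : ℝ≥0∞) ∂μ

variable {𝕜 μ}

theorem absPairing_comm (f g : Ω → E) : absPairing 𝕜 μ f g = absPairing 𝕜 μ g f := by
  refine lintegral_congr fun x => ?_
  rw [← inner_conj_symm, RCLike.nnnorm_conj]

theorem absPairing_smul_right (f : Ω → E) (c : 𝕜) (g : Ω → E) :
    absPairing 𝕜 μ f (c • g) = ‖c‖₊ * absPairing 𝕜 μ f g := by
  rw [absPairing, absPairing, ← lintegral_const_mul' _ _ coe_ne_top]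
  refine lintegral_congr fun x => ?_
  rw [Pi.smul_apply, inner_smul_right, nnnorm_mul, coe_mul]

theorem absPairing_indicator_right_le (f g : Ω → E) (s : Set Ω) :
    absPairing 𝕜 μ f (s.indicator g) ≤ absPairing 𝕜 μ f g := by
  refine lintegral_mono fun x => ?_
  by_cases hx : x ∈ s <;> simp [hx]

theorem absPairing_le_liminf [MeasurableSpace E] [OpensMeasurableSpace E]
    [SecondCountableTopology E] {g f : Ω → E} {fk : ℕ → Ω → E} (hg : Measurable g)
    (hfk : ∀ k, Measurable (fk k)) (hlim : ∀ᵐ x ∂μ, Tendsto (fk · x) atTop (𝓝 (f x))) :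
    absPairing 𝕜 μ g f ≤ atTop.liminf fun k => absPairing 𝕜 μ g (fk k) := by
  calc absPairing 𝕜 μ g f
      = ∫⁻ x, atTop.liminf fun k => (‖(inner 𝕜 (g x) (fk k x) : 𝕜)‖₊ : ℝ≥0∞) ∂μ := by
        refine lintegral_congr_ae ?_
        filter_upwards [hlim] with x hx
        exact (ENNReal.tendsto_coe.2 (tendsto_const_nhds.inner hx).nnnorm).liminf_eq.symm
    _ ≤ _ := lintegral_liminf_le fun k => (hg.inner (hfk k)).nnnorm.coe_nnreal_ennreal

theorem ofReal_re_integral_inner_le_absPairing (f g : Ω → E) :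
    ENNReal.ofReal (RCLike.re (∫ x, (inner 𝕜 (f x) (g x) : 𝕜) ∂μ)) ≤ absPairing 𝕜 μ f g := by
  calc ENNReal.ofReal (RCLike.re (∫ x, (inner 𝕜 (f x) (g x) : 𝕜) ∂μ))
      ≤ ‖∫ x, (inner 𝕜 (f x) (g x) : 𝕜) ∂μ‖ₑ := by
        rw [← ofReal_norm]
        exact ENNReal.ofReal_le_ofReal (RCLike.re_le_norm _)
    _ ≤ absPairing 𝕜 μ f g := enorm_integral_le_lintegral_enorm _

theorem absPairing_eq_ofReal_integral {f g : Ω → E}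
    (h : Integrable (fun x => (inner 𝕜 (f x) (g x) : 𝕜)) μ) :
    absPairing 𝕜 μ f g = ENNReal.ofReal (∫ x, ‖(inner 𝕜 (f x) (g x) : 𝕜)‖ ∂μ) :=
  (ofReal_integral_norm_eq_lintegral_enorm h).symm

end Pairing

section KotheDual

omit [BorelSpace (EuclideanSpace 𝕜 (Fin n))]

variable {μ : Measure Ω} {N eN : (Ω → EuclideanSpace 𝕜 (Fin n)) → ℝ≥0∞}

theorem dirDualNorm_le_iff {g : Ω → EuclideanSpace 𝕜 (Fin n)} {a : ℝ≥0∞} :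
    dirDualNorm μ N g ≤ a ↔ ∀ f, Measurable f → N f ≤ 1 → absPairing 𝕜 μ f g ≤ a := by
  unfold dirDualNorm
  exact iSup₂_le_iff.trans ⟨fun h f hf hf1 => h f ⟨hf, hf1⟩, fun h f hf => h f hf.1 hf.2⟩

theorem absPairing_le_dirDualNorm {f : Ω → EuclideanSpace 𝕜 (Fin n)}
    (g : Ω → EuclideanSpace 𝕜 (Fin n)) (hf : Measurable f) (hf1 : N f ≤ 1) :
    absPairing 𝕜 μ f g ≤ dirDualNorm μ N g :=
  dirDualNorm_le_iff.1 le_rfl f hf hf1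

theorem dirDualNorm_smul (c : 𝕜) (g : Ω → EuclideanSpace 𝕜 (Fin n)) :
    dirDualNorm μ N (c • g) = ‖c‖₊ * dirDualNorm μ N g := by
  simp only [dirDualNorm, ENNReal.mul_iSup]
  exact iSup_congr fun f => iSup_congr fun _ => absPairing_smul_right f c g

theorem dirDualNorm_indicator_le (g : Ω → EuclideanSpace 𝕜 (Fin n)) (s : Set Ω) :
    dirDualNorm μ N (s.indicator g) ≤ dirDualNorm μ N g :=
  dirDualNorm_le_iff.2 fun f hf hf1 =>
    (absPairing_indicator_right_le f g s).trans (absPairing_le_dirDualNorm g hf hf1)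

variable (μ) in
def HasFatouProperty (eN : (Ω → EuclideanSpace 𝕜 (Fin n)) → ℝ≥0∞) : Prop :=
  ∀ (fk : ℕ → Ω → EuclideanSpace 𝕜 (Fin n)) (f : Ω → EuclideanSpace 𝕜 (Fin n)),
    (∀ k, Measurable (fk k)) → Measurable f →
    (∀ᵐ x ∂μ, Tendsto (fun k => fk k x) atTop (𝓝 (f x))) → eN f ≤ atTop.liminf fun k => eN (fk k)

theorem hasFatouProperty_dirDualNorm [OpensMeasurableSpace (EuclideanSpace 𝕜 (Fin n))]
    (N : (Ω → EuclideanSpace 𝕜 (Fin n)) → ℝ≥0∞) :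
    HasFatouProperty μ (dirDualNorm μ N) := fun fk f hfk _ hlim =>
  dirDualNorm_le_iff.2 fun g hg hg1 =>
    (absPairing_le_liminf hg hfk hlim).trans <|
      liminf_le_liminf (.of_forall fun k => absPairing_le_dirDualNorm (fk k) hg hg1)

theorem HasFatouProperty.le_of_ae_eq (hF : HasFatouProperty μ eN)
    {f g : Ω → EuclideanSpace 𝕜 (Fin n)} (hf : Measurable f) (hg : Measurable g)
    (hfg : f =ᵐ[μ] g) : eN f ≤ eN g := by
  simpa using hF (fun _ => g) f (fun _ => hg) hf (hfg.mono fun x hx => hx ▸ tendsto_const_nhds)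

variable (μ eN) in
def unitBallLp (p : ℝ≥0∞) : Set (Lp (EuclideanSpace 𝕜 (Fin n)) p μ) :=
  {u | ∃ f, Measurable f ∧ eN f ≤ 1 ∧ u =ᵐ[μ] f}

theorem zero_mem_unitBallLp (p : ℝ≥0∞) (hhomog : ∀ (c : 𝕜) f, eN (c • f) = ‖c‖₊ * eN f) :
    0 ∈ unitBallLp μ eN p :=
  ⟨0, measurable_const, (by simpa using hhomog 0 0 : eN 0 = 0).trans_le zero_le_one,
    Lp.coeFn_zero _ _ _⟩

theorem HasFatouProperty.toLp_mem_unitBallLp_iff (hF : HasFatouProperty μ eN)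
    {p : ℝ≥0∞} {f : Ω → EuclideanSpace 𝕜 (Fin n)} (hf : Measurable f) (hfp : MemLp f p μ) :
    hfp.toLp f ∈ unitBallLp μ eN p ↔ eN f ≤ 1 :=
  ⟨fun ⟨_, hg, hg1, hfg⟩ => (hF.le_of_ae_eq hf hg (hfp.coeFn_toLp.symm.trans hfg)).trans hg1,
    fun hf1 => ⟨f, hf, hf1, hfp.coeFn_toLp⟩⟩

end KotheDual

section Reflexivity

variable {μ : Measure Ω} {eN : (Ω → EuclideanSpace 𝕜 (Fin n)) → ℝ≥0∞}

theorem dirDualNorm_dirDualNorm_le (hhomog : ∀ (c : 𝕜) f, eN (c • f) = ‖c‖₊ * eN f)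
    {f : Ω → EuclideanSpace 𝕜 (Fin n)} (hf : Measurable f) :
    dirDualNorm μ (dirDualNorm μ eN) f ≤ eN f :=
  le_of_forall_smul_lt_one_imp_le_one hhomog dirDualNorm_smul f fun c hc =>
    dirDualNorm_le_iff.2 fun g _ hg1 => by
      rw [absPairing_comm]
      exact (absPairing_le_dirDualNorm g (hf.const_smul c) hc.le).trans hg1

theorem convex_unitBallLp (p : ℝ≥0∞) (hhomog : ∀ (c : 𝕜) f, eN (c • f) = ‖c‖₊ * eN f)
    (htriangle : ∀ f g, eN (f + g) ≤ eN f + eN g) : Convex ℝ (unitBallLp μ eN p) := by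
  rintro u ⟨f, hf, hf1, hu⟩ v ⟨g, hg, hg1, hv⟩ a b ha hb hab
  have hnorm : ∀ {t : ℝ}, 0 ≤ t → (‖(t : 𝕜)‖₊ : ℝ≥0∞) = ENNReal.ofReal t := fun ht => by
    rw [← enorm_eq_nnnorm, ← ofReal_norm, RCLike.norm_ofReal, abs_of_nonneg ht]
  refine ⟨(a : 𝕜) • f + (b : 𝕜) • g, (hf.const_smul _).add (hg.const_smul _), ?_, ?_⟩
  · calc eN ((a : 𝕜) • f + (b : 𝕜) • g)
        ≤ ENNReal.ofReal a * eN f + ENNReal.ofReal b * eN g := by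
          rw [← hnorm ha, ← hnorm hb, ← hhomog, ← hhomog]
          exact htriangle _ _
      _ ≤ ENNReal.ofReal a * 1 + ENNReal.ofReal b * 1 := by gcongr
      _ = 1 := by rw [mul_one, mul_one, ← ENNReal.ofReal_add ha hb, hab, ENNReal.ofReal_one]
  · filter_upwards [Lp.coeFn_add (a • u) (b • v), Lp.coeFn_smul a u, Lp.coeFn_smul b v, hu, hv]
      with x hsum hau hbv hux hvx
    rw [hsum, Pi.add_apply, hau, hbv, Pi.smul_apply, Pi.smul_apply, hux, hvx, Pi.add_apply,
      Pi.smul_apply, Pi.smul_apply, RCLike.real_smul_eq_coe_smul (K := 𝕜),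
      RCLike.real_smul_eq_coe_smul (K := 𝕜)]

theorem HasFatouProperty.isClosed_unitBallLp (hF : HasFatouProperty μ eN) (p : ℝ≥0∞)
    [Fact (1 ≤ p)] : IsClosed (unitBallLp μ eN p) := by
  refine IsSeqClosed.isClosed fun u v hu huv => ?_
  obtain ⟨ns, -, hlim⟩ := (tendstoInMeasure_of_tendsto_Lp huv).exists_seq_tendsto_ae
  choose f hf hf1 hfu using fun k => hu (ns k)
  obtain ⟨w, hw, hvw⟩ := (Lp.aestronglyMeasurable v).aemeasurable
  refine ⟨w, hw, (hF f w hf hw ?_).trans (liminf_le_of_frequently_le' (.of_forall hf1)), hvw⟩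
  filter_upwards [hlim, hvw, ae_all_iff.2 hfu] with x hx hvx hfx
  rw [← hvx]
  exact hx.congr hfx

theorem dirDualNorm_le_of_forall_memLp [SigmaFinite μ] (hideal : HasIdealProperty 𝕜 eN)
    {g : Ω → EuclideanSpace 𝕜 (Fin n)} (hg : Measurable g) (p : ℝ≥0∞) {a : ℝ≥0∞}
    (h : ∀ f, Measurable f → eN f ≤ 1 → MemLp f p μ → absPairing 𝕜 μ f g ≤ a) :
    dirDualNorm μ eN g ≤ a := by
  refine dirDualNorm_le_iff.2 fun f hf hf1 => ?_
  have htrunc := measurableSet_truncSet μ hf.stronglyMeasurable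
  rw [absPairing_comm]
  refine (absPairing_le_liminf hg (fun k => hf.indicator (htrunc k))
    (.of_forall (tendsto_indicator_truncSet μ f))).trans <|
      liminf_le_of_frequently_le' (.of_forall fun k => ?_)
  rw [absPairing_comm]
  exact h _ (hf.indicator (htrunc k)) ((hideal.indicator_le (htrunc k) f).trans hf1)
    (memLp_indicator_truncSet μ hf.stronglyMeasurable p k)

theorem dirDualNorm_le_one_of_forall_re_inner_lt_one [SigmaFinite μ]
    (hideal : HasIdealProperty 𝕜 eN) {g : Lp (EuclideanSpace 𝕜 (Fin n)) 2 μ}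
    {G : Ω → EuclideanSpace 𝕜 (Fin n)} (hGm : Measurable G) (hgG : g =ᵐ[μ] G)
    (hg : ∀ w ∈ unitBallLp μ eN 2, RCLike.re (inner 𝕜 g w) < 1) :
    dirDualNorm μ eN G ≤ 1 := by
  refine dirDualNorm_le_of_forall_memLp hideal hGm 2 fun f hf hf1 hf2 => ?_
  obtain ⟨θ, hθm, hθ1, hθ⟩ := exists_measurable_phase (hGm.inner hf (𝕜 := 𝕜))
  have hθf2 : MemLp (θ • f) 2 μ :=
    hf2.of_le (hθm.smul hf).aestronglyMeasurable <| .of_forall fun x => by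
      rw [Pi.smul_apply', norm_smul]
      exact mul_le_of_le_one_left (norm_nonneg _) (hθ1 x)
  have hre := (hg _ ⟨θ • f, hθm.smul hf, (hideal θ f hθm hθ1).trans hf1, hθf2.coeFn_toLp⟩).le
  rw [inner_toLp_eq_integral hgG hθf2] at hre
  calc absPairing 𝕜 μ f G
      = ENNReal.ofReal (∫ x, ‖(inner 𝕜 (G x) (f x) : 𝕜)‖ ∂μ) := by
        rw [absPairing_comm, absPairing_eq_ofReal_integral (integrable_inner_of_ae_eq hgG hf2)]
    _ = ENNReal.ofReal (RCLike.re (∫ x, (inner 𝕜 (G x) ((θ • f) x) : 𝕜) ∂μ)) := by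
        simp_rw [Pi.smul_apply', inner_smul_right, hθ, integral_ofReal, RCLike.ofReal_re]
    _ ≤ 1 := ENNReal.ofReal_le_one.2 hre

theorem HasFatouProperty.one_le_dirDualNorm_dirDualNorm [SigmaFinite μ]
    (hF : HasFatouProperty μ eN) (hideal : HasIdealProperty 𝕜 eN)
    (hhomog : ∀ (c : 𝕜) f, eN (c • f) = ‖c‖₊ * eN f) (htriangle : ∀ f g, eN (f + g) ≤ eN f + eN g)
    {φ : Ω → EuclideanSpace 𝕜 (Fin n)} (hφ : Measurable φ) (hφ2 : MemLp φ 2 μ)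
    (h1 : 1 < eN φ) : 1 ≤ dirDualNorm μ (dirDualNorm μ eN) φ := by
  have hconv := convex_unitBallLp (μ := μ) 2 hhomog htriangle
  have hclosed := hF.isClosed_unitBallLp 2
  have h0 := zero_mem_unitBallLp (μ := μ) 2 hhomog
  have hφB : hφ2.toLp φ ∉ unitBallLp μ eN 2 := by rwa [hF.toLp_mem_unitBallLp_iff hφ, not_le]
  obtain ⟨g, hgB, hgφ⟩ := exists_re_inner_lt_one_lt_re_inner (𝕜 := 𝕜) hconv hclosed h0 hφB
  obtain ⟨G, hGm, hgG⟩ := (Lp.aestronglyMeasurable g).aemeasurable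
  have hG1 := dirDualNorm_le_one_of_forall_re_inner_lt_one hideal hGm hgG hgB
  calc 1 ≤ ENNReal.ofReal (RCLike.re (inner 𝕜 g (hφ2.toLp φ) : 𝕜)) :=
        ENNReal.one_le_ofReal.2 hgφ.le
    _ = ENNReal.ofReal (RCLike.re (∫ x, (inner 𝕜 (G x) (φ x) : 𝕜) ∂μ)) := by
        rw [inner_toLp_eq_integral hgG hφ2]
    _ ≤ absPairing 𝕜 μ G φ := ofReal_re_integral_inner_le_absPairing G φ
    _ ≤ dirDualNorm μ (dirDualNorm μ eN) φ := absPairing_le_dirDualNorm φ hGm hG1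

theorem HasFatouProperty.le_dirDualNorm_dirDualNorm [SigmaFinite μ]
    (hF : HasFatouProperty μ eN) (hideal : HasIdealProperty 𝕜 eN)
    (hhomog : ∀ (c : 𝕜) f, eN (c • f) = ‖c‖₊ * eN f) (htriangle : ∀ f g, eN (f + g) ≤ eN f + eN g)
    {f : Ω → EuclideanSpace 𝕜 (Fin n)} (hf : Measurable f) :
    eN f ≤ dirDualNorm μ (dirDualNorm μ eN) f := by
  have hL2 : ∀ φ, Measurable φ → MemLp φ 2 μ → eN φ ≤ dirDualNorm μ (dirDualNorm μ eN) φ :=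
    fun φ hφ hφ2 => le_of_forall_smul_lt_one_imp_le_one dirDualNorm_smul hhomog φ fun c hc =>
      not_lt.1 fun h1 => (hF.one_le_dirDualNorm_dirDualNorm hideal hhomog htriangle
        (hφ.const_smul c) (hφ2.const_smul c) h1).not_gt hc
  have htrunc := measurableSet_truncSet μ hf.stronglyMeasurable
  calc eN f ≤ atTop.liminf fun k => eN ((truncSet μ f k).indicator f) :=
        hF _ f (fun k => hf.indicator (htrunc k)) hf (.of_forall (tendsto_indicator_truncSet μ f))
    _ ≤ dirDualNorm μ (dirDualNorm μ eN) f := liminf_le_of_frequently_le' <| .of_forall fun k =>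
        (hL2 _ (hf.indicator (htrunc k))
          (memLp_indicator_truncSet μ hf.stronglyMeasurable 2 k)).trans
            (dirDualNorm_indicator_le f _)

end Reflexivity

theorem stmt19_general (μ : Measure Ω) [SigmaFinite μ]
    (eN : (Ω → EuclideanSpace 𝕜 (Fin n)) → ℝ≥0∞)
    -- directional ideal property
    (hideal : ∀ (h : Ω → 𝕜) (f : Ω → EuclideanSpace 𝕜 (Fin n)),
      Measurable h → (∀ x, ‖h x‖ ≤ 1) → eN (fun x => h x • f x) ≤ eN f)
    -- homogeneity
    (hhomog : ∀ (c : 𝕜) (f : Ω → EuclideanSpace 𝕜 (Fin n)),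
      eN (fun x => c • f x) = ‖c‖₊ * eN f)
    -- triangle inequality (the norm of `X` is a norm, not just a quasi-norm)
    (htriangle : ∀ f g : Ω → EuclideanSpace 𝕜 (Fin n),
      eN (fun x => f x + g x) ≤ eN f + eN g) :
    -- Fatou property ↔ Köthe reflexivity
    ((∀ (fk : ℕ → Ω → EuclideanSpace 𝕜 (Fin n)) (f : Ω → EuclideanSpace 𝕜 (Fin n)),
        (∀ k, Measurable (fk k)) → Measurable f →
        (∀ᵐ x ∂μ, Tendsto (fun k => fk k x) atTop (𝓝 (f x))) →
        eN f ≤ atTop.liminf fun k => eN (fk k)) ↔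
      (∀ f : Ω → EuclideanSpace 𝕜 (Fin n), Measurable f →
        dirDualNorm μ (dirDualNorm μ eN) f = eN f)) := by
  refine ⟨fun hF f hf => ?_, fun hrefl fk f hfk hf hlim => ?_⟩
  · exact le_antisymm (dirDualNorm_dirDualNorm_le hhomog hf)
      (HasFatouProperty.le_dirDualNorm_dirDualNorm hF hideal hhomog htriangle hf)
  · calc eN f = dirDualNorm μ (dirDualNorm μ eN) f := (hrefl f hf).symm
      _ ≤ atTop.liminf fun k => dirDualNorm μ (dirDualNorm μ eN) (fk k) :=
          hasFatouProperty_dirDualNorm _ fk f hfk hf hlim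
      _ = atTop.liminf fun k => eN (fk k) := by simp only [hrefl _ (hfk _)]

/-- **directional Lorentz–Luxemburg theorem.** An `𝔽ⁿ`-directional Banach
function space `X` over a σ-finite measure space (encoded by its extended norm `eN`, with the
directional ideal property, homogeneity, triangle inequality, completeness in Riesz–Fischer
form, non-degeneracy, and the directional saturation property) satisfies the Fatou property if
and only if `X` is Köthe reflexive, i.e. `X'' = X` with equal norms. -/
theorem stmt19 (μ : Measure Ω) [SigmaFinite μ]
    (eN : (Ω → EuclideanSpace 𝕜 (Fin n)) → ℝ≥0∞)
    -- directional ideal property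
    (hideal : ∀ (h : Ω → 𝕜) (f : Ω → EuclideanSpace 𝕜 (Fin n)),
      Measurable h → (∀ x, ‖h x‖ ≤ 1) → eN (fun x => h x • f x) ≤ eN f)
    -- homogeneity
    (hhomog : ∀ (c : 𝕜) (f : Ω → EuclideanSpace 𝕜 (Fin n)),
      eN (fun x => c • f x) = ‖c‖₊ * eN f)
    -- triangle inequality (the norm of `X` is a norm, not just a quasi-norm)
    (htriangle : ∀ f g : Ω → EuclideanSpace 𝕜 (Fin n),
      eN (fun x => f x + g x) ≤ eN f + eN g)
    -- completeness, in Riesz–Fischer form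
    (hcomplete : ∀ fk : ℕ → Ω → EuclideanSpace 𝕜 (Fin n),
      (∀ k, Measurable (fk k)) → (∑' k, eN (fk k)) ≠ ⊤ →
      ∃ f : Ω → EuclideanSpace 𝕜 (Fin n), Measurable f ∧
        (∀ᵐ x ∂μ, HasSum (fun k => fk k x) (f x)) ∧ eN f ≠ ⊤)
    -- non-degeneracy
    (hnondeg : ∀ g : Ω → EuclideanSpace 𝕜 (Fin n), Measurable g →
      (∀ f : Ω → EuclideanSpace 𝕜 (Fin n), Measurable f → eN f ≠ ⊤ →
        ∫ x, (inner 𝕜 (f x) (g x) : 𝕜) ∂μ = 0) →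
      g =ᵐ[μ] 0)
    -- directional saturation
    (hsat : ∀ g : Ω → EuclideanSpace 𝕜 (Fin n), Measurable g → ¬ g =ᵐ[μ] 0 →
      ∃ E : Set Ω, MeasurableSet E ∧ E ⊆ {x | g x ≠ 0} ∧ 0 < μ E ∧
        eN (E.indicator g) ≠ ⊤) :
    -- Fatou property ↔ Köthe reflexivity
    ((∀ (fk : ℕ → Ω → EuclideanSpace 𝕜 (Fin n)) (f : Ω → EuclideanSpace 𝕜 (Fin n)),
        (∀ k, Measurable (fk k)) → Measurable f →
        (∀ᵐ x ∂μ, Tendsto (fun k => fk k x) atTop (𝓝 (f x))) →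
        eN f ≤ atTop.liminf fun k => eN (fk k)) ↔
      (∀ f : Ω → EuclideanSpace 𝕜 (Fin n), Measurable f →
        dirDualNorm μ (dirDualNorm μ eN) f = eN f)) :=
  stmt19_general μ eN hideal hhomog htriangle
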